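/- For every d \geq 2, all complex roots of the polynomial p_d(z) = P_{d,d}(z) are simple (i.e., p_d and its derivative p_d' have no common complex root). -/

import Mathlib

/-!
`p = P_{k,n}` satisfies `X (4X + 1) p'' = ((k + n) + (4n - 6) X) p' - n (n - 1) p`. Write a multiple
root `λ` of multiplicity `m ≥ 2` as `p = (X - λ)^m q` with `q(λ) ≠ 0`; the two lowest-order terms
of the equation in `X - λ` force `λ (4λ + 1) = 0` and the indicial relation
`(m - 1)(8λ + 1) = (k + n) + (4n - 6) λ`. Now `λ = 0` is excluded by `p(0) = (k + n)! / (k! n!) ≠ 0`,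
and `λ = -1/4` gives `2m + 2k + 1 = 0`. So the roots of every `P_{k,n}` are simple.
-/

/-- The multinomial coefficient `(a+b+c)! / (a! b! c!)`. -/
def mult3 (a b c : ℕ) : ℕ := (a + b + c).factorial / (a.factorial * b.factorial * c.factorial)

/-- `P k n = ∑_{b=0}^{⌊n/2⌋} multinomial(k+n-b; k, b, n-2b) z^b ∈ ℚ[z]`. -/
noncomputable def Ppoly (k n : ℕ) : Polynomial ℚ :=
  ∑ b ∈ Finset.range (n / 2 + 1), Polynomial.C (mult3 k b (n - 2 * b) : ℚ) * Polynomial.X ^ b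

open Polynomial
open scoped Nat

lemma factorial_mul_factorial_mul_factorial_dvd (a b c : ℕ) : a ! * b ! * c ! ∣ (a + b + c)! :=
  (Nat.mul_dvd_mul_right (Nat.factorial_mul_factorial_dvd_factorial_add a b) _).trans
    (Nat.factorial_mul_factorial_dvd_factorial_add (a + b) c)

lemma mult3_pos (a b c : ℕ) : 0 < mult3 a b c :=
  Nat.div_pos
    (Nat.le_of_dvd (Nat.factorial_pos _) (factorial_mul_factorial_mul_factorial_dvd a b c))
    (by positivity)

lemma cast_mult3 (a b c : ℕ) : (mult3 a b c : ℚ) = (a + b + c)! / (a ! * b ! * c !) := by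
  rw [mult3, Nat.cast_div_charZero (factorial_mul_factorial_mul_factorial_dvd a b c)]
  push_cast; rfl

lemma coeff_Ppoly (k n b : ℕ) :
    (Ppoly k n).coeff b = if 2 * b ≤ n then (mult3 k b (n - 2 * b) : ℚ) else 0 := by
  simp only [Ppoly, finsetSum_coeff, coeff_C_mul_X_pow, Finset.sum_ite_eq, Finset.mem_range]
  congr 1
  exact propext (by omega)

lemma coeff_Ppoly_succ (k n b : ℕ) :
    ((b : ℚ) + 1) * (k + n - b) * (Ppoly k n).coeff (b + 1)
      = ((n : ℚ) - 2 * b) * (n - 2 * b - 1) * (Ppoly k n).coeff b := by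
  rw [coeff_Ppoly, coeff_Ppoly]
  by_cases hb : 2 * b + 2 ≤ n
  · obtain ⟨c, rfl⟩ := Nat.exists_eq_add_of_le hb
    rw [if_pos (by omega), if_pos (by omega), show 2 * b + 2 + c - 2 * (b + 1) = c by omega,
      show 2 * b + 2 + c - 2 * b = c + 2 by omega, cast_mult3, cast_mult3,
      show k + b + (c + 2) = k + (b + 1) + c + 1 by omega, Nat.factorial_succ (k + (b + 1) + c),
      Nat.factorial_succ b, Nat.factorial_succ (c + 1), Nat.factorial_succ c]
    push_cast
    field_simp
    ring
  · rw [if_neg (by omega)]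
    split_ifs with hb'
    · obtain h | h : n = 2 * b ∨ n = 2 * b + 1 := by omega
      all_goals subst h; push_cast; ring
    · ring

theorem Ppoly_ode (k n : ℕ) :
    X * (C 4 * X + 1) * derivative (derivative (Ppoly k n))
      = (C ((k : ℚ) + n) + C (4 * (n : ℚ) - 6) * X) * derivative (Ppoly k n)
        - C ((n : ℚ) * (n - 1)) * Ppoly k n := by
  ext m
  have hrec := coeff_Ppoly_succ k n m
  rcases m with _ | _ | m <;>
  · simp only [add_mul, mul_add, mul_one, mul_assoc, mul_left_comm X, coeff_add, coeff_sub,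
      coeff_C_mul, coeff_X_mul, mul_coeff_zero, coeff_X_zero, coeff_C_zero, coeff_derivative]
    push_cast at hrec ⊢
    linear_combination -hrec

lemma derivative_X_sub_C_pow_succ_mul {R : Type*} [CommRing R] (a : R) (m : ℕ) (q : R[X]) :
    derivative ((X - C a) ^ (m + 1) * q)
      = (X - C a) ^ m * (((m : R[X]) + 1) * q + (X - C a) * derivative q) := by
  simp only [derivative_mul, derivative_pow, derivative_sub, derivative_X, derivative_C,
    sub_zero, mul_one, Nat.add_sub_cancel, Nat.cast_add, Nat.cast_one, map_add, map_natCast,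
    map_one]
  ring

section SecondOrderODE

variable {K : Type*} [Field K] [CharZero K] {P Q R p : K[X]} {a : K}

/-- At a root of multiplicity `m ≥ 2` of a solution of `P y'' = Q y' + R y`, the terms of order
`m - 2` and `m - 1` in `X - a` give these two conditions. -/
theorem eval_eq_zero_and_indicial_of_multiple_root (hp : p ≠ 0)
    (hode : P * derivative (derivative p) = Q * derivative p + R * p)
    (h0 : p.eval a = 0) (h1 : (derivative p).eval a = 0) :
    P.eval a = 0 ∧ ((p.rootMultiplicity a : K) - 1) * (derivative P).eval a = Q.eval a := by
  obtain ⟨k, hk⟩ : ∃ k, p.rootMultiplicity a = k + 2 :=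
    ⟨_, (Nat.sub_add_cancel ((one_lt_rootMultiplicity_iff_isRoot hp).mpr ⟨h0, h1⟩)).symm⟩
  obtain ⟨q, hpq, hq⟩ : ∃ q, p = (X - C a) ^ (k + 2) * q ∧ q.eval a ≠ 0 :=
    ⟨_, hk ▸ (pow_mul_divByMonic_rootMultiplicity_eq p a).symm,
      hk ▸ eval_divByMonic_pow_rootMultiplicity_ne_zero a hp⟩
  set t : K[X] := X - C a
  have ht' : derivative t = 1 := by simp [t]
  set S₁ : K[X] := ((k : K[X]) + 2) * q + t * derivative q
  set S₂ : K[X] := ((k : K[X]) + 2) * ((k : K[X]) + 1) * q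
    + 2 * ((k : K[X]) + 2) * (t * derivative q) + t ^ 2 * derivative (derivative q)
  have hd1 : derivative p = t ^ (k + 1) * S₁ := by
    rw [hpq, derivative_X_sub_C_pow_succ_mul]; push_cast; ring
  have hd2 : derivative (derivative p) = t ^ k * S₂ := by
    rw [hd1, derivative_X_sub_C_pow_succ_mul]
    simp only [S₁, derivative_add, derivative_mul, ht', derivative_natCast, derivative_ofNat]
    ring
  have hred : P * S₂ = Q * (t * S₁) + R * (t ^ 2 * q) := by
    refine mul_left_cancel₀ (pow_ne_zero k (X_sub_C_ne_zero a)) ?_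
    rw [hd2, hd1, hpq] at hode
    linear_combination hode
  have hta : t.eval a = 0 := by simp [t]
  have hS₁ : S₁.eval a = (k + 2) * q.eval a := by simp [S₁, hta]
  have hS₂ : S₂.eval a = (k + 2) * (k + 1) * q.eval a := by simp [S₂, hta]
  have hk₁ : (k : K) + 1 ≠ 0 := by exact_mod_cast k.succ_ne_zero
  have hk₂ : (k : K) + 2 ≠ 0 := by exact_mod_cast (k + 1).succ_ne_zero
  have hPa : P.eval a = 0 := by
    have h := congrArg (eval a) hred
    simp only [eval_add, eval_mul, eval_pow, hS₁, hS₂, hta, zero_mul, mul_zero, add_zero,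
      zero_pow two_ne_zero] at h
    simpa [hq, hk₁, hk₂] using h
  refine ⟨hPa, ?_⟩
  have h := congrArg (fun f => (derivative f).eval a) hred
  simp only [derivative_mul, derivative_add, derivative_pow, eval_add, eval_mul, eval_pow,
    hS₁, hS₂, hta, ht', hPa, eval_one, zero_mul, mul_zero, add_zero, zero_add, one_mul] at h
  rw [hk]
  refine mul_left_cancel₀ (mul_ne_zero hk₂ hq) ?_
  push_cast
  linear_combination h

end SecondOrderODE

theorem Ppoly_eval_zero (k n : ℕ) : (Ppoly k n).eval 0 = mult3 k 0 n := by
  rw [← coeff_zero_eq_eval_zero, coeff_Ppoly, if_pos (Nat.zero_le n), Nat.mul_zero, Nat.sub_zero]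

theorem aeval_derivative_Ppoly_ne_zero {K : Type*} [Field K] [Algebra ℚ K] (k n : ℕ) {lam : K}
    (h0 : aeval lam (Ppoly k n) = 0) : aeval lam (derivative (Ppoly k n)) ≠ 0 := by
  have : CharZero K := charZero_of_injective_algebraMap (algebraMap ℚ K).injective
  intro h1
  set p := (Ppoly k n).map (algebraMap ℚ K)
  have hp0 : p.eval 0 ≠ 0 := by
    rw [eval_zero_map, Ppoly_eval_zero, map_natCast]
    exact Nat.cast_ne_zero.mpr (mult3_pos k 0 n).ne'
  have hroot : p.eval lam = 0 := by rwa [eval_map_algebraMap]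
  have hode : X * (C 4 * X + 1) * derivative (derivative p)
      = (C ((k : K) + n) + C (4 * (n : K) - 6) * X) * derivative p
        + (-C ((n : K) * (n - 1))) * p := by
    simpa [p, derivative_map, sub_eq_add_neg] using
      congrArg (map (algebraMap ℚ K)) (Ppoly_ode k n)
  obtain ⟨hA, hind⟩ := eval_eq_zero_and_indicial_of_multiple_root
    (fun h => hp0 (by rw [h, eval_zero])) hode hroot (by rwa [derivative_map, eval_map_algebraMap])
  simp only [eval_mul, eval_add, eval_X, eval_C, eval_one, mul_eq_zero, derivative_mul,
    derivative_add, derivative_X, derivative_C, derivative_one, eval_zero] at hA hind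
  rcases hA with rfl | h4
  · exact hp0 hroot
  · set m := p.rootMultiplicity lam
    have : ((2 * m + 2 * k + 1 : ℕ) : K) = 0 := by
      push_cast
      linear_combination (-2) * hind + (4 * (m : K) - 1 - 2 * n) * h4
    exact Nat.cast_ne_zero.mpr (Nat.succ_ne_zero _) this

theorem stmt4_general (d : ℕ) (lam : ℂ) (h0 : Polynomial.aeval lam (Ppoly d d) = 0) :
    Polynomial.aeval lam (Polynomial.derivative (Ppoly d d)) ≠ 0 :=
  aeval_derivative_Ppoly_ne_zero d d h0

/-- All complex roots of `p_d = P_{d,d}` are simple: `p_d` and `p_d'` share no complex root. -/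
theorem stmt4 (d : ℕ) (hd : 2 ≤ d) (lam : ℂ) (h0 : Polynomial.aeval lam (Ppoly d d) = 0) :
    Polynomial.aeval lam (Polynomial.derivative (Ppoly d d)) ≠ 0 :=
  stmt4_general d lam h0
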